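/- Let H_A and H_B be finite-dimensional Hilbert spaces, let E be a function on unit vectors of H_B with values in [0,1] (extended by E(0) = 0), and let f : [0,∞) → [0,∞) be a concave, monotonically increasing function such that |E(|ψ⟩) − E(|ψ'⟩)| ≤ f(‖ψ − ψ'‖₁) for all unit vectors |ψ⟩, |ψ'⟩ ∈ H_B and E(|ψ⟩) ≤ f(1) for all unit vectors |ψ⟩ ∈ H_B. Then for any fixed orthonormal basis β of H_A and any unit vectors |Ψ⟩, |Ψ'⟩ ∈ H_A ⊗ H_B, the average post-measurement entanglements satisfy |Ē_β(|Ψ⟩) − Ē_β(|Ψ'⟩)| ≤ f(2‖Ψ − Ψ'‖₁) + ‖Ψ − Ψ'‖₁. -/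

import Mathlib

/-!
For unit vectors, `Δ = |ψ⟩⟨ψ| - |φ⟩⟨φ|` satisfies `Δ³ = (1 - |⟨ψ|φ⟩|²) Δ`, whence
`‖Δ‖₁ = 2 √(1 - |⟨ψ|φ⟩|²)`. Fix an outcome with probabilities `p, q`, unnormalized
post-measurement vectors `c, c'` and normalized ones `φ, φ'`. Splitting
`p E(φ) - q E(φ') = p (E(φ) - E(φ')) + (p - q) E(φ')` bounds its contribution by
`p f(‖φ - φ'‖₁) + |p - q|`, and a direct computation gives `p ‖φ - φ'‖₁ ≤ R + |p - q|` and
`|p - q| ≤ R` for `R = √((p + q)² - 4 |⟨c|c'⟩|²)`. Since `∑ᵢ ⟨cᵢ|cᵢ'⟩ = ⟨Ψ|Ψ'⟩`, the reverse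
Minkowski inequality `∑ √(xᵢ² - yᵢ²) ≤ √((∑ xᵢ)² - (∑ yᵢ)²)` yields `∑ Rᵢ ≤ ‖Ψ - Ψ'‖₁`.
Jensen's inequality for the concave `f` and its monotonicity finish the proof.
-/

open scoped BigOperators ComplexConjugate ComplexOrder

noncomputable section

namespace QIpaper

/-- Inner product `⟨ψ|φ⟩`, conjugate-linear in the first argument. -/
def braket {I : Type*} [Fintype I] (ψ φ : I → ℂ) : ℂ := ∑ x, conj (ψ x) * φ x

/-- Outer product `|ψ⟩⟨ψ|`. -/
def dm {I : Type*} (ψ : I → ℂ) : Matrix I I ℂ := Matrix.of fun x y => ψ x * conj (ψ y)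

open Classical in
/-- Positive semidefinite square root (junk value `0` on non-PSD matrices). -/
def psdSqrt {I : Type*} [Fintype I] [DecidableEq I] (A : Matrix I I ℂ) : Matrix I I ℂ :=
  if h : A.PosSemidef then
    (h.1.eigenvectorUnitary : Matrix I I ℂ) *
      Matrix.diagonal ((↑) ∘ Real.sqrt ∘ h.1.eigenvalues) *
      (star h.1.eigenvectorUnitary : Matrix I I ℂ)
  else 0

/-- The trace norm `‖A‖₁ = tr √(AᴴA)`. -/
def traceNorm {I : Type*} [Fintype I] [DecidableEq I] (A : Matrix I I ℂ) : ℝ :=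
  (psdSqrt (A.conjTranspose * A)).trace.re

/-- Fidelity `F(ρ,σ) = tr √(√ρ σ √ρ)`. -/
def fidelity {I : Type*} [Fintype I] [DecidableEq I] (ρ σ : Matrix I I ℂ) : ℝ :=
  (psdSqrt (psdSqrt ρ * σ * psdSqrt ρ)).trace.re

/-- Purity `tr(ρ²)`. -/
def purity {I : Type*} [Fintype I] (ρ : Matrix I I ℂ) : ℝ := ((ρ * ρ).trace).re

def sigmaX : Matrix (Fin 2) (Fin 2) ℂ := !![0, 1; 1, 0]
def sigmaY : Matrix (Fin 2) (Fin 2) ℂ := !![0, -Complex.I; Complex.I, 0]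
def sigmaZ : Matrix (Fin 2) (Fin 2) ℂ := !![1, 0; 0, -1]

/-- `σ_y^{⊗I}` on the qubits indexed by `I`. -/
def sigmaYn {I : Type*} [Fintype I] [DecidableEq I] : Matrix (I → Fin 2) (I → Fin 2) ℂ :=
  Matrix.of fun x y => ∏ k, sigmaY (x k) (y k)

/-- The `n`-tangle `τ(ψ) = |⟨ψ|σ_y^{⊗n}|ψ*⟩|`. -/
def tangle {I : Type*} [Fintype I] [DecidableEq I] (ψ : (I → Fin 2) → ℂ) : ℝ :=
  ‖∑ x, ∑ y, conj (ψ x) * sigmaYn x y * conj (ψ y)‖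

/-- Entrywise complex conjugate of a matrix. -/
def conjM {I J : Type*} (ρ : Matrix I J ℂ) : Matrix I J ℂ := Matrix.of fun x y => conj (ρ x y)

/-- `ρ̃ = σ_y^{⊗n} ρ* σ_y^{⊗n}`. -/
def tildeM {I : Type*} [Fintype I] [DecidableEq I] (ρ : Matrix (I → Fin 2) (I → Fin 2) ℂ) :
    Matrix (I → Fin 2) (I → Fin 2) ℂ := sigmaYn * conjM ρ * sigmaYn

/-- The Wootters tilde `|ψ̃⟩ = σ_y^{⊗n}|ψ*⟩`. -/
def wtilde {I : Type*} [Fintype I] [DecidableEq I] (ψ : (I → Fin 2) → ℂ) : (I → Fin 2) → ℂ :=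
  sigmaYn.mulVec (fun x => conj (ψ x))

/-- Reduced density matrix of the pure state `ψ` on the qubits in `s`
(tracing out the complement). -/
def reduced {n : ℕ} (s : Finset (Fin n)) (ψ : (Fin n → Fin 2) → ℂ) :
    Matrix ({i : Fin n // i ∈ s} → Fin 2) ({i : Fin n // i ∈ s} → Fin 2) ℂ :=
  Matrix.of fun a b => ∑ c : {i : Fin n // i ∉ s} → Fin 2,
    ψ (fun i => if h : i ∈ s then a ⟨i, h⟩ else c ⟨i, h⟩) *
    conj (ψ (fun i => if h : i ∈ s then b ⟨i, h⟩ else c ⟨i, h⟩))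

/-- GME-concurrence `C_GME(ψ) = min_{∅ ⊊ γ ⊊ [n]} √(2(1 − tr ψ_γ²))`. -/
def gme {n : ℕ} (ψ : (Fin n → Fin 2) → ℂ) : ℝ :=
  sInf {r : ℝ | ∃ γ : Finset (Fin n), γ ≠ ∅ ∧ γ ≠ Finset.univ ∧
    r = Real.sqrt (2 * (1 - purity (reduced γ ψ)))}

/-- Concentratable entanglement `C(ψ; s) = 1 − 2^{−|s|} Σ_{γ⊆s} tr(ψ_γ²)`. -/
def CE {n : ℕ} (ψ : (Fin n → Fin 2) → ℂ) (s : Finset (Fin n)) : ℝ :=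
  1 - (1 / 2 ^ s.card) * ∑ γ ∈ s.powerset, purity (reduced γ ψ)

/-- The subnormalized post-measurement vector `(⟨v|⊗I)|Ψ⟩`. -/
def contract {IA IB : Type*} [Fintype IA] (v : IA → ℂ) (Ψ : IA × IB → ℂ) : IB → ℂ :=
  fun y => ∑ x, conj (v x) * Ψ (x, y)

/-- Probability `p_v = ⟨Ψ|(|v⟩⟨v| ⊗ I)|Ψ⟩` of outcome `v`. -/
def prob {IA IB : Type*} [Fintype IA] [Fintype IB] (v : IA → ℂ) (Ψ : IA × IB → ℂ) : ℝ :=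
  (braket (contract v Ψ) (contract v Ψ)).re

/-- Normalized post-measurement state (the zero vector when the probability vanishes). -/
def postState {IA IB : Type*} [Fintype IA] [Fintype IB] (v : IA → ℂ) (Ψ : IA × IB → ℂ) :
    IB → ℂ := fun y => ((Real.sqrt (prob v Ψ) : ℂ))⁻¹ * contract v Ψ y

/-- `b` is an orthonormal family. (An orthonormal family indexed by the space's own
index type is an orthonormal basis.) -/
def ONB {J I : Type*} [Fintype I] [DecidableEq J] (b : J → I → ℂ) : Prop :=
  ∀ i j, braket (b i) (b j) = if i = j then 1 else 0

/-- Average post-measurement entanglement `Ē_β(Ψ) = Σ_i p_i E(φ_i)`. -/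
def avgE {ι IA IB : Type*} [Fintype ι] [Fintype IA] [Fintype IB]
    (E : (IB → ℂ) → ℝ) (b : ι → IA → ℂ) (Ψ : IA × IB → ℂ) : ℝ :=
  ∑ i, prob (b i) Ψ * E (postState (b i) Ψ)

/-- Multipartite entanglement of assistance: supremum of `Ē_β` over all
orthonormal bases `β` of `H_A`. -/
def Lglobal {IA IB : Type*} [Fintype IA] [Fintype IB] [DecidableEq IA]
    (E : (IB → ℂ) → ℝ) (Ψ : IA × IB → ℂ) : ℝ :=
  sSup {r : ℝ | ∃ b : IA → IA → ℂ, ONB b ∧ r = avgE E b Ψ}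

/-- Tensor-product basis of `(ℂ²)^{⊗K}` built from single-qubit bases. -/
def productBasis {K : Type*} [Fintype K] (q : K → Fin 2 → Fin 2 → ℂ) :
    (K → Fin 2) → (K → Fin 2) → ℂ :=
  fun i x => ∏ k, q k (i k) (x k)

/-- Localizable multipartite entanglement: supremum of `Ē_β` over product bases of
single-qubit orthonormal bases of `H_A = (ℂ²)^{⊗K}`. -/
def Lloc {K IB : Type*} [Fintype K] [DecidableEq K] [Fintype IB]
    (E : (IB → ℂ) → ℝ) (Ψ : (K → Fin 2) × IB → ℂ) : ℝ :=
  sSup {r : ℝ | ∃ q : K → Fin 2 → Fin 2 → ℂ, (∀ k, ONB (q k)) ∧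
    r = avgE E (productBasis q) Ψ}

/-- Partial trace over the `A` system of `|Ψ⟩⟨Ψ|`. -/
def ptraceA {IA IB : Type*} [Fintype IA] (Ψ : IA × IB → ℂ) : Matrix IB IB ℂ :=
  Matrix.of fun y y' => ∑ x, Ψ (x, y) * conj (Ψ (x, y'))

/-- Reduced density matrix of `|Ψ⟩⟨Ψ|` on the subset `s` of the `B` qubits. -/
def reducedB {IA : Type*} [Fintype IA] {n : ℕ} (s : Finset (Fin n))
    (Ψ : IA × (Fin n → Fin 2) → ℂ) :
    Matrix ({i : Fin n // i ∈ s} → Fin 2) ({i : Fin n // i ∈ s} → Fin 2) ℂ :=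
  Matrix.of fun a b => ∑ x : IA, ∑ c : {i : Fin n // i ∉ s} → Fin 2,
    Ψ (x, fun i => if h : i ∈ s then a ⟨i, h⟩ else c ⟨i, h⟩) *
    conj (Ψ (x, fun i => if h : i ∈ s then b ⟨i, h⟩ else c ⟨i, h⟩))


open scoped Matrix

section Braket

variable {I : Type*} [Fintype I]

lemma braket_eq_inner (ψ φ : I → ℂ) :
    braket ψ φ = inner ℂ (WithLp.toLp 2 ψ : EuclideanSpace ℂ I) (WithLp.toLp 2 φ) := by
  simp [braket, PiLp.inner_apply, mul_comm]

lemma braket_eq_dotProduct (ψ φ : I → ℂ) : braket ψ φ = star ψ ⬝ᵥ φ := rfl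

lemma conj_braket (ψ φ : I → ℂ) : conj (braket ψ φ) = braket φ ψ := by
  rw [braket_eq_inner, braket_eq_inner, inner_conj_symm]

lemma braket_mul_braket (ψ φ : I → ℂ) :
    braket ψ φ * braket φ ψ = ((‖braket ψ φ‖ ^ 2 : ℝ) : ℂ) := by
  rw [← conj_braket ψ φ, Complex.mul_conj']
  push_cast; rfl

lemma braket_self_eq_re (ψ : I → ℂ) : braket ψ ψ = ((braket ψ ψ).re : ℂ) := by
  rw [braket_eq_inner]
  exact (inner_self_ofReal_re _).symm

lemma re_braket_self_nonneg (ψ : I → ℂ) : 0 ≤ (braket ψ ψ).re := by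
  rw [braket_eq_inner]
  exact inner_self_nonneg (𝕜 := ℂ)

lemma norm_braket_sq_le (ψ φ : I → ℂ) :
    ‖braket ψ φ‖ ^ 2 ≤ (braket ψ ψ).re * (braket φ φ).re := by
  simp only [braket_eq_inner, ← RCLike.re_to_complex, inner_self_eq_norm_sq, ← mul_pow]
  exact pow_le_pow_left₀ (norm_nonneg _) (norm_inner_le_norm _ _) 2

end Braket

lemma sub_pow_three_of_isIdempotentElem {R A : Type*} [CommRing R] [Ring A] [Algebra R A]
    {P Q : A} {a : R} (hP : IsIdempotentElem P) (hQ : IsIdempotentElem Q)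
    (hPQP : P * Q * P = a • P) (hQPQ : Q * P * Q = a • Q) :
    (P - Q) ^ 3 = (1 - a) • (P - Q) := by
  calc (P - Q) ^ 3 = P * P * P - P * Q * P + Q * P * Q - Q * Q * Q
        - P * P * Q + P * (Q * Q) - Q * (P * P) + Q * Q * P := by noncomm_ring
    _ = (1 - a) • (P - Q) := by
        simp only [hP.eq, hQ.eq, hPQP, hQPQ, sub_smul, one_smul, smul_sub]
        abel

lemma dm_eq_vecMulVec {I : Type*} (ψ : I → ℂ) : dm ψ = Matrix.vecMulVec ψ (star ψ) := rfl

section TraceNorm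

variable {I : Type*} [Fintype I]

lemma dm_isHermitian (ψ : I → ℂ) : (dm ψ).IsHermitian :=
  (Matrix.posSemidef_vecMulVec_self_star ψ).isHermitian

lemma trace_dm (ψ : I → ℂ) : (dm ψ).trace = braket ψ ψ := by
  rw [dm_eq_vecMulVec, Matrix.trace_vecMulVec, dotProduct_comm]; rfl

lemma dm_mul_dm (ψ φ : I → ℂ) :
    dm ψ * dm φ = braket ψ φ • Matrix.vecMulVec ψ (star φ) := by
  rw [dm_eq_vecMulVec, dm_eq_vecMulVec, Matrix.vecMulVec_mul_vecMulVec, Matrix.vecMulVec_smul]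
  rfl

lemma trace_dm_mul_dm (ψ φ : I → ℂ) :
    (dm ψ * dm φ).trace = ((‖braket ψ φ‖ ^ 2 : ℝ) : ℂ) := by
  rw [dm_mul_dm, Matrix.trace_smul, Matrix.trace_vecMulVec, dotProduct_comm, smul_eq_mul,
    ← braket_mul_braket]
  rfl

lemma dm_mul_dm_mul_dm (ψ φ : I → ℂ) :
    dm ψ * dm φ * dm ψ = ((‖braket ψ φ‖ ^ 2 : ℝ) : ℂ) • dm ψ := by
  rw [dm_mul_dm, Matrix.smul_mul, dm_eq_vecMulVec, Matrix.vecMulVec_mul_vecMulVec,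
    Matrix.vecMulVec_smul, smul_smul, ← braket_eq_dotProduct, braket_mul_braket]

lemma dm_mul_dm_self {ψ : I → ℂ} (hψ : braket ψ ψ = 1) : dm ψ * dm ψ = dm ψ := by
  rw [dm_mul_dm, hψ, one_smul]; rfl

variable [DecidableEq I]

open scoped MatrixOrder in
lemma psdSqrt_eq_of_mul_self {A B : Matrix I I ℂ} (hB : B.PosSemidef) (h : B * B = A) :
    psdSqrt A = B := by
  have hA : A.PosSemidef := by
    simpa only [hB.1.eq, h] using Matrix.posSemidef_conjTranspose_mul_self B
  rw [psdSqrt, dif_pos hA]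
  have h1 : CFC.sqrt A = B := CFC.sqrt_unique h hB.nonneg
  rw [CFC.sqrt_eq_real_sqrt A hA.nonneg, cfcₙ_eq_cfc (hf0 := by simp), hA.1.cfc_eq] at h1
  rw [← h1, Matrix.IsHermitian.cfc, Unitary.conjStarAlgAut_apply]
  rfl

lemma psdSqrt_zero : psdSqrt (0 : Matrix I I ℂ) = 0 :=
  psdSqrt_eq_of_mul_self .zero (mul_zero 0)

lemma eq_zero_of_isHermitian_of_pow_three_eq_zero {Δ : Matrix I I ℂ} (hΔ : Δ.IsHermitian)
    (h : Δ ^ 3 = 0) : Δ = 0 := by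
  have h2 : (Δ * Δ)ᴴ * (Δ * Δ) = 0 := by
    rw [Matrix.conjTranspose_mul, hΔ.eq, show Δ * Δ * (Δ * Δ) = Δ ^ 3 * Δ by noncomm_ring, h,
      zero_mul]
  rw [← Matrix.conjTranspose_mul_self_eq_zero, hΔ.eq]
  exact Matrix.conjTranspose_mul_self_eq_zero.1 h2

/-- If the spectrum of the Hermitian `Δ` lies in `{0, t, -t}`, then `|Δ| = Δ² / t`. -/
lemma psdSqrt_conjTranspose_mul_self_of_pow_three {Δ : Matrix I I ℂ} (hΔ : Δ.IsHermitian)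
    {t : ℝ} (ht : 0 ≤ t) (h : Δ ^ 3 = ((t ^ 2 : ℝ) : ℂ) • Δ) :
    psdSqrt (Δᴴ * Δ) = ((t⁻¹ : ℝ) : ℂ) • (Δ * Δ) := by
  rw [hΔ.eq]
  rcases ht.eq_or_lt with rfl | ht
  · have hΔ0 := eq_zero_of_isHermitian_of_pow_three_eq_zero hΔ (by simpa using h)
    simp [hΔ0, psdSqrt_zero]
  · refine psdSqrt_eq_of_mul_self ?_ ?_
    · rw [Complex.coe_smul]
      simpa only [hΔ.eq] using (Matrix.posSemidef_conjTranspose_mul_self Δ).smul (inv_nonneg.2 ht.le)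
    · have hscalar : ((t⁻¹ : ℝ) : ℂ) * ((t⁻¹ : ℝ) : ℂ) * ((t ^ 2 : ℝ) : ℂ) = 1 := by
        push_cast
        field_simp
      rw [smul_mul_smul, show Δ * Δ * (Δ * Δ) = Δ ^ 3 * Δ by noncomm_ring, h, smul_mul_assoc,
        smul_smul, hscalar, one_smul]

lemma traceNorm_of_pow_three {Δ : Matrix I I ℂ} (hΔ : Δ.IsHermitian)
    {t : ℝ} (ht : 0 ≤ t) (h : Δ ^ 3 = ((t ^ 2 : ℝ) : ℂ) • Δ) :
    traceNorm Δ = (Δ * Δ).trace.re / t := by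
  rw [traceNorm, psdSqrt_conjTranspose_mul_self_of_pow_three hΔ ht h, Matrix.trace_smul,
    smul_eq_mul, Complex.re_ofReal_mul, div_eq_inv_mul]

theorem traceNorm_dm_sub_dm {ψ φ : I → ℂ} (hψ : braket ψ ψ = 1) (hφ : braket φ φ = 1) :
    traceNorm (dm ψ - dm φ) = 2 * √(1 - ‖braket ψ φ‖ ^ 2) := by
  set c := ‖braket ψ φ‖ ^ 2
  have hc : c ≤ 1 := by
    simpa only [hψ, hφ, Complex.one_re, one_mul] using norm_braket_sq_le ψ φ
  set t := √(1 - c)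
  have ht : t ^ 2 = 1 - c := Real.sq_sqrt (by linarith)
  have hcube : (dm ψ - dm φ) ^ 3 = ((t ^ 2 : ℝ) : ℂ) • (dm ψ - dm φ) := by
    rw [ht, Complex.ofReal_sub, Complex.ofReal_one]
    refine sub_pow_three_of_isIdempotentElem (dm_mul_dm_self hψ) (dm_mul_dm_self hφ)
      (dm_mul_dm_mul_dm ψ φ) ?_
    rw [dm_mul_dm_mul_dm, ← conj_braket, Complex.norm_conj]
  have hsq : ((dm ψ - dm φ) * (dm ψ - dm φ)).trace.re = 2 * t ^ 2 := by
    rw [sub_mul, mul_sub, mul_sub, dm_mul_dm_self hψ, dm_mul_dm_self hφ]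
    simp only [Matrix.trace_sub, trace_dm, trace_dm_mul_dm, hψ, hφ, ← conj_braket ψ φ,
      Complex.norm_conj, Complex.sub_re, Complex.one_re, Complex.ofReal_re, ht]
    ring
  rw [traceNorm_of_pow_three ((dm_isHermitian ψ).sub (dm_isHermitian φ)) (Real.sqrt_nonneg _)
    hcube, hsq, mul_div_assoc, sq, mul_self_div_self]

end TraceNorm

section Scalar

lemma sum_sqrt_sq_sub_sq_le {ι : Type*} [Fintype ι] (x y : ι → ℝ) (hy : ∀ i, 0 ≤ y i)
    (hxy : ∀ i, y i ≤ x i) :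
    ∑ i, √(x i ^ 2 - y i ^ 2) ≤ √((∑ i, x i) ^ 2 - (∑ i, y i) ^ 2) := by
  have hsub : ∀ i, 0 ≤ x i - y i := fun i => sub_nonneg.2 (hxy i)
  have hadd : ∀ i, 0 ≤ x i + y i := fun i => by linarith [hy i, hxy i]
  calc ∑ i, √(x i ^ 2 - y i ^ 2) = ∑ i, √(x i - y i) * √(x i + y i) := by
        refine Finset.sum_congr rfl fun i _ => ?_
        rw [← Real.sqrt_mul (hsub i)]
        ring_nf
    _ ≤ √(∑ i, (x i - y i)) * √(∑ i, (x i + y i)) := Real.sum_sqrt_mul_sqrt_le _ hsub hadd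
    _ = √((∑ i, x i) ^ 2 - (∑ i, y i) ^ 2) := by
        rw [← Real.sqrt_mul (Finset.sum_nonneg fun i _ => hsub i), Finset.sum_sub_distrib,
          Finset.sum_add_distrib]
        ring_nf

variable {p q v : ℝ}

lemma abs_sub_le_sqrt_sq_sub (hv : v ^ 2 ≤ p * q) : |p - q| ≤ √((p + q) ^ 2 - 4 * v ^ 2) :=
  Real.abs_le_sqrt (by nlinarith)

lemma mul_two_sqrt_one_sub_div_le (hp : 0 ≤ p) (hq : 0 ≤ q) (hv : v ^ 2 ≤ p * q) :
    p * (2 * √(1 - v ^ 2 / (p * q))) ≤ √((p + q) ^ 2 - 4 * v ^ 2) + |p - q| := by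
  rcases hp.eq_or_lt with rfl | hp
  · simp only [zero_mul]; positivity
  rcases hq.eq_or_lt with rfl | hq
  · obtain rfl : v = 0 := pow_eq_zero_iff two_ne_zero |>.1 (by nlinarith [sq_nonneg v])
    simp [Real.sqrt_sq hp.le, abs_of_pos hp, mul_two]
  set A := √((p + q) ^ 2 - 4 * v ^ 2)
  set X := p + q - 2 * v ^ 2 / q
  have hA : A ^ 2 = (p + q) ^ 2 - 4 * v ^ 2 := Real.sq_sqrt (by nlinarith [sq_nonneg (p - q)])
  have hX : |X| ≤ A := by
    refine Real.abs_le_sqrt (sub_nonneg.1 ?_)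
    have : (p + q) ^ 2 - 4 * v ^ 2 - X ^ 2 = 4 * v ^ 2 * (p * q - v ^ 2) / q ^ 2 := by
      simp only [X]; field_simp; ring
    rw [this]
    have := sub_nonneg.2 hv
    positivity
  have hsq : (p * (2 * √(1 - v ^ 2 / (p * q)))) ^ 2 = A ^ 2 + (p - q) ^ 2 + 2 * (p - q) * X := by
    have h1 : 0 ≤ 1 - v ^ 2 / (p * q) := sub_nonneg.2 ((div_le_one (by positivity)).2 hv)
    rw [mul_pow, mul_pow, Real.sq_sqrt h1, hA]
    simp only [X]
    field_simp
    ring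
  refine le_of_pow_le_pow_left₀ two_ne_zero (by positivity) ?_
  rw [hsq]
  have hpqX : (p - q) * X ≤ |p - q| * A := (le_abs_self _).trans
    ((abs_mul _ _).trans_le (mul_le_mul_of_nonneg_left hX (abs_nonneg _)))
  nlinarith [sq_abs (p - q)]

end Scalar

section Measurement

variable {IA IB : Type*} [Fintype IA] [Fintype IB]

lemma sum_braket_contract [DecidableEq IA] {β : IA → IA → ℂ} (hβ : ONB β) (Ψ Ψ' : IA × IB → ℂ) :
    ∑ i, braket (contract (β i) Ψ) (contract (β i) Ψ') = braket Ψ Ψ' := by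
  set U : Matrix IA IA ℂ := (Matrix.of β)ᵀ
  have hU : U * Uᴴ = 1 := mul_eq_one_comm.1 (Matrix.ext hβ)
  have hcol : ∀ a b : IA → ℂ, star (Uᴴ *ᵥ a) ⬝ᵥ (Uᴴ *ᵥ b) = star a ⬝ᵥ b := fun a b => by
    rw [Matrix.star_mulVec, Matrix.conjTranspose_conjTranspose, Matrix.dotProduct_mulVec,
      Matrix.vecMul_vecMul, hU, Matrix.vecMul_one]
  calc ∑ i, braket (contract (β i) Ψ) (contract (β i) Ψ')
      = ∑ y, star (Uᴴ *ᵥ fun x => Ψ (x, y)) ⬝ᵥ (Uᴴ *ᵥ fun x => Ψ' (x, y)) := Finset.sum_comm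
    _ = braket Ψ Ψ' := by
        simp only [hcol]
        rw [braket, Fintype.sum_prod_type, Finset.sum_comm]
        rfl

lemma sum_prob [DecidableEq IA] {β : IA → IA → ℂ} (hβ : ONB β) {Ψ : IA × IB → ℂ}
    (hΨ : braket Ψ Ψ = 1) : ∑ i, prob (β i) Ψ = 1 := by
  simp only [prob, ← Complex.re_sum, sum_braket_contract hβ, hΨ, Complex.one_re]

lemma prob_nonneg (v : IA → ℂ) (Ψ : IA × IB → ℂ) : 0 ≤ prob v Ψ :=
  re_braket_self_nonneg _

lemma braket_postState (v : IA → ℂ) (Ψ Ψ' : IA × IB → ℂ) :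
    braket (postState v Ψ) (postState v Ψ') =
      (((√(prob v Ψ))⁻¹ * (√(prob v Ψ'))⁻¹ : ℝ) : ℂ) * braket (contract v Ψ) (contract v Ψ') := by
  simp only [braket, postState, map_mul, map_inv₀, Complex.conj_ofReal, Finset.mul_sum]
  refine Finset.sum_congr rfl fun y _ => ?_
  push_cast
  ring

lemma braket_postState_self {v : IA → ℂ} {Ψ : IA × IB → ℂ} (h : 0 < prob v Ψ) :
    braket (postState v Ψ) (postState v Ψ) = 1 := by
  rw [braket_postState, braket_self_eq_re, ← mul_inv, Real.mul_self_sqrt h.le, ← Complex.ofReal_mul]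
  exact_mod_cast inv_mul_cancel₀ h.ne'

lemma norm_braket_postState_sq (v : IA → ℂ) (Ψ Ψ' : IA × IB → ℂ) :
    ‖braket (postState v Ψ) (postState v Ψ')‖ ^ 2 =
      ‖braket (contract v Ψ) (contract v Ψ')‖ ^ 2 / (prob v Ψ * prob v Ψ') := by
  rw [braket_postState, norm_mul, Complex.norm_real, Real.norm_of_nonneg (by positivity), mul_pow,
    mul_pow, inv_pow, inv_pow, Real.sq_sqrt (prob_nonneg v Ψ), Real.sq_sqrt (prob_nonneg v Ψ')]
  ring

end Measurement

section Outcome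

variable {IA IB : Type*} [Fintype IA] [Fintype IB]

/-- The trace distance of the post-measurement states when both probabilities are positive
(`traceNorm_postState_sub`); it is `2` otherwise, as `x / 0 = 0`. -/
def postDist (v : IA → ℂ) (Ψ Ψ' : IA × IB → ℂ) : ℝ :=
  2 * √(1 - ‖braket (contract v Ψ) (contract v Ψ')‖ ^ 2 / (prob v Ψ * prob v Ψ'))

/-- `‖|c⟩⟨c| - |c'⟩⟨c'|‖₁` for the unnormalized post-measurement vectors `c, c'`. -/
def branchDist (v : IA → ℂ) (Ψ Ψ' : IA × IB → ℂ) : ℝ :=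
  √((prob v Ψ + prob v Ψ') ^ 2 - 4 * ‖braket (contract v Ψ) (contract v Ψ')‖ ^ 2)

lemma norm_braket_contract_sq_le (v : IA → ℂ) (Ψ Ψ' : IA × IB → ℂ) :
    ‖braket (contract v Ψ) (contract v Ψ')‖ ^ 2 ≤ prob v Ψ * prob v Ψ' :=
  norm_braket_sq_le _ _

lemma postDist_nonneg (v : IA → ℂ) (Ψ Ψ' : IA × IB → ℂ) : 0 ≤ postDist v Ψ Ψ' := by
  unfold postDist; positivity

lemma prob_mul_postDist_le (v : IA → ℂ) (Ψ Ψ' : IA × IB → ℂ) :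
    prob v Ψ * postDist v Ψ Ψ' ≤ branchDist v Ψ Ψ' + |prob v Ψ - prob v Ψ'| :=
  mul_two_sqrt_one_sub_div_le (prob_nonneg v Ψ) (prob_nonneg v Ψ')
    (norm_braket_contract_sq_le v Ψ Ψ')

lemma abs_prob_sub_prob_le_branchDist (v : IA → ℂ) (Ψ Ψ' : IA × IB → ℂ) :
    |prob v Ψ - prob v Ψ'| ≤ branchDist v Ψ Ψ' :=
  abs_sub_le_sqrt_sq_sub (norm_braket_contract_sq_le v Ψ Ψ')

lemma sum_branchDist_le [DecidableEq IA] [DecidableEq IB] {β : IA → IA → ℂ} (hβ : ONB β)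
    {Ψ Ψ' : IA × IB → ℂ} (hΨ : braket Ψ Ψ = 1) (hΨ' : braket Ψ' Ψ' = 1) :
    ∑ i, branchDist (β i) Ψ Ψ' ≤ traceNorm (dm Ψ - dm Ψ') := by
  set p := fun i => prob (β i) Ψ
  set q := fun i => prob (β i) Ψ'
  set w := fun i => ‖braket (contract (β i) Ψ) (contract (β i) Ψ')‖
  have hw : ∀ i, 2 * w i ≤ p i + q i := fun i => by
    nlinarith [norm_braket_contract_sq_le (β i) Ψ Ψ', sq_nonneg (p i - q i), prob_nonneg (β i) Ψ,
      prob_nonneg (β i) Ψ', norm_nonneg (braket (contract (β i) Ψ) (contract (β i) Ψ'))]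
  have hV : ‖braket Ψ Ψ'‖ ≤ ∑ i, w i := by
    rw [← sum_braket_contract hβ Ψ Ψ']
    exact norm_sum_le _ _
  have hpq : ∑ i, (p i + q i) = 2 := by
    rw [Finset.sum_add_distrib, sum_prob hβ hΨ, sum_prob hβ hΨ']; norm_num
  calc ∑ i, branchDist (β i) Ψ Ψ' = ∑ i, √((p i + q i) ^ 2 - (2 * w i) ^ 2) := by
        simp only [branchDist, p, q, w, mul_pow]; norm_num
    _ ≤ √((∑ i, (p i + q i)) ^ 2 - (∑ i, 2 * w i) ^ 2) :=
        sum_sqrt_sq_sub_sq_le _ _ (fun i => by positivity) hw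
    _ ≤ √(2 ^ 2 * (1 - ‖braket Ψ Ψ'‖ ^ 2)) := by
        rw [hpq, ← Finset.mul_sum]
        gcongr
        nlinarith [norm_nonneg (braket Ψ Ψ')]
    _ = traceNorm (dm Ψ - dm Ψ') := by
        rw [traceNorm_dm_sub_dm hΨ hΨ', Real.sqrt_mul (by norm_num), Real.sqrt_sq (by norm_num)]

lemma abs_prob_mul_le_prob {E : (IB → ℂ) → ℝ}
    (hE_range : ∀ ψ : IB → ℂ, braket ψ ψ = 1 → E ψ ∈ Set.Icc (0 : ℝ) 1)
    (v : IA → ℂ) (Ψ : IA × IB → ℂ) : |prob v Ψ * E (postState v Ψ)| ≤ prob v Ψ := by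
  rcases (prob_nonneg v Ψ).eq_or_lt with hp | hp
  · simp [← hp]
  · have hE := hE_range _ (braket_postState_self hp)
    rw [abs_mul, abs_of_pos hp, abs_of_nonneg hE.1]
    exact mul_le_of_le_one_right hp.le hE.2

variable [DecidableEq IB]

lemma traceNorm_postState_sub {v : IA → ℂ} {Ψ Ψ' : IA × IB → ℂ} (hp : 0 < prob v Ψ)
    (hq : 0 < prob v Ψ') :
    traceNorm (dm (postState v Ψ) - dm (postState v Ψ')) = postDist v Ψ Ψ' := by
  rw [traceNorm_dm_sub_dm (braket_postState_self hp) (braket_postState_self hq),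
    norm_braket_postState_sq, postDist]

lemma abs_prob_mul_sub_le {E : (IB → ℂ) → ℝ} {f : ℝ → ℝ}
    (hf_nonneg : ∀ x : ℝ, 0 ≤ x → 0 ≤ f x)
    (hE_range : ∀ ψ : IB → ℂ, braket ψ ψ = 1 → E ψ ∈ Set.Icc (0 : ℝ) 1)
    (hE_cont : ∀ ψ ψ' : IB → ℂ, braket ψ ψ = 1 → braket ψ' ψ' = 1 →
      |E ψ - E ψ'| ≤ f (traceNorm (dm ψ - dm ψ')))
    (v : IA → ℂ) (Ψ Ψ' : IA × IB → ℂ) :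
    |prob v Ψ * E (postState v Ψ) - prob v Ψ' * E (postState v Ψ')| ≤
      prob v Ψ * f (postDist v Ψ Ψ') + |prob v Ψ - prob v Ψ'| := by
  set p := prob v Ψ
  set q := prob v Ψ'
  have hp := prob_nonneg v Ψ
  have hq := prob_nonneg v Ψ'
  have hfD : 0 ≤ p * f (postDist v Ψ Ψ') := mul_nonneg hp (hf_nonneg _ (postDist_nonneg v Ψ Ψ'))
  by_cases h0 : p = 0 ∨ q = 0
  · have hpq : p + q ≤ |p - q| := by
      rcases h0 with h | h <;> simp [h, le_abs_self]
    linarith [abs_sub _ _ |>.trans (add_le_add (abs_prob_mul_le_prob hE_range v Ψ)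
      (abs_prob_mul_le_prob hE_range v Ψ'))]
  obtain ⟨hp0, hq0⟩ := not_or.1 h0
  have hp := hp.lt_of_ne' hp0
  have hq := hq.lt_of_ne' hq0
  have hE' := hE_range _ (braket_postState_self hq)
  calc |p * E (postState v Ψ) - q * E (postState v Ψ')|
      = |p * (E (postState v Ψ) - E (postState v Ψ')) + (p - q) * E (postState v Ψ')| := by
        ring_nf
    _ ≤ p * |E (postState v Ψ) - E (postState v Ψ')| + |p - q| * 1 := by
        refine (abs_add_le _ _).trans (add_le_add ?_ ?_) <;> rw [abs_mul]
        · rw [abs_of_pos hp]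
        · exact mul_le_mul_of_nonneg_left (abs_le.2 ⟨by linarith [hE'.1], hE'.2⟩) (abs_nonneg _)
    _ ≤ p * f (postDist v Ψ Ψ') + |p - q| := by
        rw [mul_one, ← traceNorm_postState_sub hp hq]
        gcongr
        exact hE_cont _ _ (braket_postState_self hp) (braket_postState_self hq)

end Outcome

theorem avg_entanglement_continuity_general
    {IA IB : Type*} [Fintype IA] [DecidableEq IA] [Fintype IB] [DecidableEq IB]
    (E : (IB → ℂ) → ℝ) (f : ℝ → ℝ)
    (hf_nonneg : ∀ x : ℝ, 0 ≤ x → 0 ≤ f x)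
    (hf_concave : ConcaveOn ℝ (Set.Ici (0 : ℝ)) f)
    (hf_mono : MonotoneOn f (Set.Ici (0 : ℝ)))
    (hE_range : ∀ ψ : IB → ℂ, braket ψ ψ = 1 → E ψ ∈ Set.Icc (0 : ℝ) 1)
    (hE_cont : ∀ ψ ψ' : IB → ℂ, braket ψ ψ = 1 → braket ψ' ψ' = 1 →
      |E ψ - E ψ'| ≤ f (traceNorm (dm ψ - dm ψ')))
    (β : IA → IA → ℂ) (hβ : ONB β)
    (Ψ Ψ' : IA × IB → ℂ) (hΨ : braket Ψ Ψ = 1) (hΨ' : braket Ψ' Ψ' = 1) :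
    |avgE E β Ψ - avgE E β Ψ'| ≤
      f (2 * traceNorm (dm Ψ - dm Ψ')) + traceNorm (dm Ψ - dm Ψ') := by
  set T := traceNorm (dm Ψ - dm Ψ')
  set p := fun i => prob (β i) Ψ
  set q := fun i => prob (β i) Ψ'
  set D := fun i => postDist (β i) Ψ Ψ'
  have hbranch := sum_branchDist_le hβ hΨ hΨ'
  have hpq : ∑ i, |p i - q i| ≤ T :=
    (Finset.sum_le_sum fun i _ => abs_prob_sub_prob_le_branchDist (β i) Ψ Ψ').trans hbranch
  have hpD : ∑ i, p i * D i ≤ 2 * T := by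
    refine (Finset.sum_le_sum fun i _ => prob_mul_postDist_le (β i) Ψ Ψ').trans ?_
    rw [Finset.sum_add_distrib]
    linarith
  have hjensen : ∑ i, p i * f (D i) ≤ f (∑ i, p i * D i) := by
    simpa only [smul_eq_mul] using hf_concave.le_map_sum (fun i _ => prob_nonneg (β i) Ψ)
      (sum_prob hβ hΨ) (fun i _ => postDist_nonneg (β i) Ψ Ψ')
  have hpD_nonneg : 0 ≤ ∑ i, p i * D i :=
    Finset.sum_nonneg fun i _ => mul_nonneg (prob_nonneg _ _) (postDist_nonneg _ _ _)
  have hmono : f (∑ i, p i * D i) ≤ f (2 * T) := hf_mono hpD_nonneg (hpD_nonneg.trans hpD) hpD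
  calc |avgE E β Ψ - avgE E β Ψ'|
      ≤ ∑ i, |p i * E (postState (β i) Ψ) - q i * E (postState (β i) Ψ')| := by
        rw [avgE, avgE, ← Finset.sum_sub_distrib]
        exact Finset.abs_sum_le_sum_abs _ _
    _ ≤ ∑ i, (p i * f (D i) + |p i - q i|) :=
        Finset.sum_le_sum fun i _ => abs_prob_mul_sub_le hf_nonneg hE_range hE_cont (β i) Ψ Ψ'
    _ ≤ f (2 * T) + T := by
        rw [Finset.sum_add_distrib]
        linarith

/-- Continuity bound for the average post-measurement entanglement: under
the stated assumptions on the seed measure `E` and the function `f`, for every fixed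
orthonormal basis `β` of `H_A` and unit vectors `Ψ, Ψ'`,
`|Ē_β(Ψ) − Ē_β(Ψ')| ≤ f(2‖Ψ − Ψ'‖₁) + ‖Ψ − Ψ'‖₁`. -/
theorem avg_entanglement_continuity
    {IA IB : Type*} [Fintype IA] [DecidableEq IA] [Fintype IB] [DecidableEq IB]
    (E : (IB → ℂ) → ℝ) (f : ℝ → ℝ)
    (hf_nonneg : ∀ x : ℝ, 0 ≤ x → 0 ≤ f x)
    (hf_concave : ConcaveOn ℝ (Set.Ici (0 : ℝ)) f)
    (hf_mono : MonotoneOn f (Set.Ici (0 : ℝ)))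
    (hE_range : ∀ ψ : IB → ℂ, braket ψ ψ = 1 → E ψ ∈ Set.Icc (0 : ℝ) 1)
    (hE_zero : E 0 = 0)
    (hE_cont : ∀ ψ ψ' : IB → ℂ, braket ψ ψ = 1 → braket ψ' ψ' = 1 →
      |E ψ - E ψ'| ≤ f (traceNorm (dm ψ - dm ψ')))
    (hE_bound : ∀ ψ : IB → ℂ, braket ψ ψ = 1 → E ψ ≤ f 1)
    (β : IA → IA → ℂ) (hβ : ONB β)
    (Ψ Ψ' : IA × IB → ℂ) (hΨ : braket Ψ Ψ = 1) (hΨ' : braket Ψ' Ψ' = 1) :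
    |avgE E β Ψ - avgE E β Ψ'| ≤
      f (2 * traceNorm (dm Ψ - dm Ψ')) + traceNorm (dm Ψ - dm Ψ') :=
  avg_entanglement_continuity_general E f hf_nonneg hf_concave hf_mono hE_range hE_cont β hβ Ψ Ψ' hΨ
    hΨ'

end QIpaper
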